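/- arXiv:2311.05134 — 4 statements merged into one kernel-verified Lean document; each statement's English description precedes it below -/
import Mathlib

section
/- For all probability measures μ, ν on ℝ^d with finite second moments, SW₂(μ,ν) ≤ (1/√d) W₂(μ,ν). -/
open MeasureTheory Metric Filter Topology
open scoped ENNReal RealInnerProductSpace Pointwise

noncomputable section

abbrev Euc (d : ℕ) := EuclideanSpace ℝ (Fin d)

/-- The normalized uniform (rotation-invariant) probability measure on the unit sphere. -/
def uniformSphere (d : ℕ) : Measure (sphere (0 : Euc d) 1) :=
  (((volume : Measure (Euc d)).toSphere) Set.univ)⁻¹ • (volume : Measure (Euc d)).toSphere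

/-- Couplings (transport plans) between two measures. -/
def Coupling {X : Type*} [MeasurableSpace X] (μ ν : Measure X) : Set (Measure (X × X)) :=
  {γ | γ.map Prod.fst = μ ∧ γ.map Prod.snd = ν}

/-- Squared 2-Wasserstein distance. -/
def W2sq {X : Type*} [MeasurableSpace X] [Dist X] (μ ν : Measure X) : ℝ≥0∞ :=
  ⨅ (γ : Measure (X × X)) (_ : γ ∈ Coupling μ ν),
    ∫⁻ p, ENNReal.ofReal (dist p.1 p.2 ^ 2) ∂γ

/-- 2-Wasserstein distance. -/
def W2 {X : Type*} [MeasurableSpace X] [Dist X] (μ ν : Measure X) : ℝ≥0∞ :=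
  (W2sq μ ν) ^ (1/2 : ℝ)

/-- Projection (pushforward) of a measure on ℝ^d onto the direction θ. -/
def projMeas (d : ℕ) (μ : Measure (Euc d)) (θ : sphere (0 : Euc d) 1) : Measure ℝ :=
  μ.map (fun x => ⟪x, (θ : Euc d)⟫)

/-- Squared sliced 2-Wasserstein distance: sphere average of squared Wasserstein distances of
projections. -/
def SW2sq (d : ℕ) (μ ν : Measure (Euc d)) : ℝ≥0∞ :=
  ∫⁻ θ, W2sq (projMeas d μ θ) (projMeas d ν θ) ∂(uniformSphere d)

/-- Sliced 2-Wasserstein distance. -/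
def SW2 (d : ℕ) (μ ν : Measure (Euc d)) : ℝ≥0∞ :=
  (SW2sq d μ ν) ^ (1/2 : ℝ)

/-- Finite second moment. -/
def FiniteSecondMoment {X : Type*} [MeasurableSpace X] [Norm X] (μ : Measure X) : Prop :=
  ∫⁻ x, ENNReal.ofReal (‖x‖ ^ 2) ∂μ < ⊤

/-- Narrow (weak) convergence of a sequence of measures. -/
def NarrowTendsto {X : Type*} [MeasurableSpace X] [TopologicalSpace X]
    (μs : ℕ → Measure X) (μ : Measure X) : Prop :=
  ∀ f : BoundedContinuousFunction X ℝ,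
    Tendsto (fun k => ∫ x, f x ∂(μs k)) atTop (𝓝 (∫ x, f x ∂μ))

end

/-!
Projecting a coupling `γ` of `μ` and `ν` onto the direction `θ` gives a coupling of the projected
measures of cost `∫ ⟪x - y, θ⟫² dγ`. Averaging over `θ` and exchanging the integrals bounds the
sliced cost by `∫ (⨍ ⟪x - y, θ⟫² dθ) dγ`. The sphere measure is invariant under the reflection
exchanging two vectors of equal norm, so `⨍ ⟪v, θ⟫² dθ` only depends on `‖v‖`; since
`∑ i, ⟪‖v‖ • b i, θ⟫² = ‖v‖²` on the sphere for an orthonormal basis `b`, it equals `‖v‖² / d`.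
-/

open Set

theorem LinearEquiv.preimage_smul_set_eq {R M N : Type*} [Semiring R] [AddCommMonoid M]
    [AddCommMonoid N] [Module R M] [Module R N] (e : M ≃ₗ[R] N) (S : Set R) (A : Set N) :
    e ⁻¹' (S • A) = S • e ⁻¹' A := by
  ext x
  simp only [mem_preimage, Set.mem_smul]
  constructor
  · rintro ⟨r, hr, a, ha, hx⟩
    exact ⟨r, hr, e.symm a, by simpa using ha, by rw [← e.symm_apply_apply x, ← hx]; simp⟩
  · rintro ⟨r, hr, a, ha, rfl⟩
    exact ⟨r, hr, e a, ha, by simp⟩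

section SphereAverage

variable {E : Type*} [NormedAddCommGroup E] [InnerProductSpace ℝ E] [MeasurableSpace E]
  [BorelSpace E]

theorem MeasureTheory.MeasurePreserving.toSphere {μ : Measure E} {e : E ≃ₗᵢ[ℝ] E}
    (he : MeasurePreserving e μ μ) :
    MeasurePreserving (Subtype.map e fun x hx => by simpa using hx :
      sphere (0 : E) 1 → sphere (0 : E) 1) μ.toSphere μ.toSphere := by
  set F : sphere (0 : E) 1 → sphere (0 : E) 1 := Subtype.map e fun x hx => by simpa using hx
  have hF : Measurable F := (e.continuous.subtype_map _).measurable
  refine ⟨hF, Measure.ext fun s hs => ?_⟩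
  have himage : Subtype.val '' (F ⁻¹' s) = e ⁻¹' (Subtype.val '' s) := by
    ext x
    simp [F, Subtype.map]
  have hsmul := e.toLinearEquiv.preimage_smul_set_eq (Ioo (0 : ℝ) 1) (Subtype.val '' s)
  rw [LinearIsometryEquiv.coe_toLinearEquiv] at hsmul
  rw [Measure.map_apply hF hs, Measure.toSphere_apply' _ (hF hs), Measure.toSphere_apply' _ hs,
    himage, ← hsmul, he.measure_preimage_emb e.toHomeomorph.measurableEmbedding]

variable [FiniteDimensional ℝ E]

theorem lintegral_inner_sq_toSphere_eq_of_norm_eq {u v : E} (h : ‖u‖ = ‖v‖) :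
    ∫⁻ θ, ENNReal.ofReal (⟪u, (θ : E)⟫ ^ 2) ∂(volume : Measure E).toSphere =
      ∫⁻ θ, ENNReal.ofReal (⟪v, (θ : E)⟫ ^ 2) ∂(volume : Measure E).toSphere := by
  set e := (ℝ ∙ (u - v))ᗮ.reflection
  symm
  rw [← e.measurePreserving.toSphere.lintegral_comp (by fun_prop)]
  refine lintegral_congr fun θ => ?_
  change ENNReal.ofReal (⟪v, e θ⟫ ^ 2) = _
  rw [← Submodule.reflection_sub h, e.inner_map_map]

theorem lintegral_inner_sq_toSphere_mul_finrank (v : E) :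
    (∫⁻ θ, ENNReal.ofReal (⟪v, (θ : E)⟫ ^ 2) ∂(volume : Measure E).toSphere) *
        Module.finrank ℝ E =
      ENNReal.ofReal (‖v‖ ^ 2) * (volume : Measure E).toSphere univ := by
  set b := stdOrthonormalBasis ℝ E
  have hsum (θ : sphere (0 : E) 1) : ∑ i, ⟪‖v‖ • b i, (θ : E)⟫ ^ 2 = ‖v‖ ^ 2 := by
    simp only [real_inner_smul_left, mul_pow, ← Finset.mul_sum, b.sum_sq_inner_right,
      norm_eq_of_mem_sphere θ, one_pow, mul_one]
  calc (∫⁻ θ, ENNReal.ofReal (⟪v, (θ : E)⟫ ^ 2) ∂(volume : Measure E).toSphere) *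
        Module.finrank ℝ E
      = ∑ _i : Fin (Module.finrank ℝ E),
          ∫⁻ θ, ENNReal.ofReal (⟪v, (θ : E)⟫ ^ 2) ∂(volume : Measure E).toSphere := by
        simp [mul_comm]
    _ = ∑ i, ∫⁻ θ, ENNReal.ofReal (⟪‖v‖ • b i, (θ : E)⟫ ^ 2) ∂(volume : Measure E).toSphere :=
        Finset.sum_congr rfl fun i _ => lintegral_inner_sq_toSphere_eq_of_norm_eq <| by
          simp [norm_smul, b.orthonormal.1 i]
    _ = ∫⁻ _ : sphere (0 : E) 1, ENNReal.ofReal (‖v‖ ^ 2) ∂(volume : Measure E).toSphere := by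
        rw [← lintegral_finsetSum _ fun i _ => by fun_prop]
        refine lintegral_congr fun θ => ?_
        rw [← ENNReal.ofReal_sum_of_nonneg fun i _ => sq_nonneg _, hsum]
    _ = ENNReal.ofReal (‖v‖ ^ 2) * (volume : Measure E).toSphere univ := lintegral_const _

end SphereAverage

theorem lintegral_inner_sq_uniformSphere {d : ℕ} (hd : 0 < d) (v : Euc d) :
    ∫⁻ θ, ENNReal.ofReal (⟪v, (θ : Euc d)⟫ ^ 2) ∂uniformSphere d =
      ENNReal.ofReal (‖v‖ ^ 2) / d := by
  have : Nonempty (Fin d) := ⟨⟨0, hd⟩⟩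
  have hσ : (volume : Measure (Euc d)).toSphere univ ≠ 0 :=
    Measure.measure_univ_ne_zero.2 (Measure.toSphere_ne_zero _)
  have hv := lintegral_inner_sq_toSphere_mul_finrank v
  rw [finrank_euclideanSpace_fin] at hv
  rw [uniformSphere, lintegral_smul_measure, smul_eq_mul,
    ENNReal.eq_div_iff (by positivity) (ENNReal.natCast_ne_top d), mul_left_comm,
    mul_comm (d : ℝ≥0∞), hv, mul_left_comm, ENNReal.inv_mul_cancel hσ (measure_ne_top _ _), mul_one]

section Couplings

variable {X Y : Type*} [MeasurableSpace X] [MeasurableSpace Y] {μ ν : Measure X}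
  {γ : Measure (X × X)}

theorem map_prodMap_mem_coupling (hγ : γ ∈ Coupling μ ν) {f : X → Y} (hf : Measurable f) :
    γ.map (Prod.map f f) ∈ Coupling (μ.map f) (ν.map f) := by
  constructor
  · rw [Measure.map_map measurable_fst (hf.prodMap hf),
      show Prod.fst ∘ Prod.map f f = f ∘ Prod.fst from rfl,
      ← Measure.map_map hf measurable_fst, hγ.1]
  · rw [Measure.map_map measurable_snd (hf.prodMap hf),
      show Prod.snd ∘ Prod.map f f = f ∘ Prod.snd from rfl,
      ← Measure.map_map hf measurable_snd, hγ.2]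

theorem isFiniteMeasure_of_mem_coupling [IsFiniteMeasure μ] (hγ : γ ∈ Coupling μ ν) :
    IsFiniteMeasure γ where
  measure_univ_lt_top := by
    rw [← preimage_univ (f := Prod.fst), ← Measure.map_apply measurable_fst .univ, hγ.1]
    exact measure_lt_top μ univ

theorem W2sq_map_le [Dist Y] (hγ : γ ∈ Coupling μ ν) {f : X → Y} (hf : Measurable f) :
    W2sq (μ.map f) (ν.map f) ≤ ∫⁻ p, ENNReal.ofReal (dist (f p.1) (f p.2) ^ 2) ∂γ :=
  (iInf₂_le _ (map_prodMap_mem_coupling hγ hf)).trans (lintegral_map_le _ _)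

end Couplings

theorem W2sq_projMeas_le {d : ℕ} {μ ν : Measure (Euc d)} {γ : Measure (Euc d × Euc d)}
    (hγ : γ ∈ Coupling μ ν) (θ : sphere (0 : Euc d) 1) :
    W2sq (projMeas d μ θ) (projMeas d ν θ) ≤
      ∫⁻ p, ENNReal.ofReal (⟪p.1 - p.2, (θ : Euc d)⟫ ^ 2) ∂γ := by
  refine (W2sq_map_le hγ (by fun_prop)).trans_eq ?_
  simp only [Real.dist_eq, sq_abs, inner_sub_left]

theorem SW2sq_mul_le_lintegral {d : ℕ} (hd : 0 < d) {μ ν : Measure (Euc d)}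
    {γ : Measure (Euc d × Euc d)} [SFinite γ] (hγ : γ ∈ Coupling μ ν) :
    SW2sq d μ ν * d ≤ ∫⁻ p, ENNReal.ofReal (dist p.1 p.2 ^ 2) ∂γ := by
  have hd0 : (d : ℝ≥0∞) ≠ 0 := by positivity
  have : SFinite (uniformSphere d) := by unfold uniformSphere; infer_instance
  calc SW2sq d μ ν * d
      ≤ (∫⁻ θ, ∫⁻ p, ENNReal.ofReal (⟪p.1 - p.2, (θ : Euc d)⟫ ^ 2) ∂γ ∂uniformSphere d) * d :=
        mul_le_mul_left (lintegral_mono (W2sq_projMeas_le hγ)) _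
    _ = (∫⁻ p, ∫⁻ θ, ENNReal.ofReal (⟪p.1 - p.2, (θ : Euc d)⟫ ^ 2) ∂uniformSphere d ∂γ) * d := by
        rw [lintegral_lintegral_swap (by fun_prop)]
    _ = (∫⁻ p, ENNReal.ofReal (dist p.1 p.2 ^ 2) ∂γ) * (d : ℝ≥0∞)⁻¹ * d := by
        simp_rw [lintegral_inner_sq_uniformSphere hd, ← dist_eq_norm, ENNReal.div_eq_inv_mul]
        rw [lintegral_const_mul' _ _ (ENNReal.inv_ne_top.2 hd0), mul_comm ((d : ℝ≥0∞)⁻¹)]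
    _ = ∫⁻ p, ENNReal.ofReal (dist p.1 p.2 ^ 2) ∂γ := by
        rw [mul_assoc, ENNReal.inv_mul_cancel hd0 (ENNReal.natCast_ne_top d), mul_one]

theorem SW2sq_le_W2sq_div {d : ℕ} (hd : 0 < d) (μ ν : Measure (Euc d)) [IsFiniteMeasure μ] :
    SW2sq d μ ν ≤ W2sq μ ν / d := by
  rw [ENNReal.le_div_iff_mul_le (.inl (by positivity)) (.inl (ENNReal.natCast_ne_top d))]
  refine le_iInf₂ fun γ hγ => ?_
  have := isFiniteMeasure_of_mem_coupling hγ
  exact SW2sq_mul_le_lintegral hd hγ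

theorem SW2_le_W2_div_sqrt_general (d : ℕ) (hd : 0 < d) (μ ν : Measure (Euc d))
    [IsProbabilityMeasure μ] :
    SW2 d μ ν ≤ W2 μ ν / ENNReal.ofReal (Real.sqrt d) := by
  have hsqrt : (d : ℝ≥0∞) ^ (1 / 2 : ℝ) = ENNReal.ofReal (Real.sqrt d) := by
    rw [← ENNReal.ofReal_natCast, ENNReal.ofReal_rpow_of_nonneg (Nat.cast_nonneg d) (by norm_num),
      Real.sqrt_eq_rpow]
  rw [SW2, W2, ← hsqrt, ← ENNReal.div_rpow_of_nonneg _ _ (by norm_num)]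
  exact ENNReal.rpow_le_rpow (SW2sq_le_W2sq_div hd μ ν) (by norm_num)

/-- SW₂(μ,ν) ≤ (1/√d) W₂(μ,ν). -/
theorem SW2_le_W2_div_sqrt (d : ℕ) (hd : 0 < d) (μ ν : Measure (Euc d))
    [IsProbabilityMeasure μ] [IsProbabilityMeasure ν]
    (hμ2 : FiniteSecondMoment μ) (hν2 : FiniteSecondMoment ν) :
    SW2 d μ ν ≤ W2 μ ν / ENNReal.ofReal (Real.sqrt d) :=
  SW2_le_W2_div_sqrt_general d hd μ ν
end

section
/- In ℝ², let μ₀ = ½(δ_{(-1,-1)} + δ_{(1,1)}) and μ₁ = ½(δ_{(-1,1)} + δ_{(1,-1)}). There is no probability measure σ on ℝ² that simultaneously satisfies: (a) the projection of σ onto the x-axis is ½(δ_{-1}+δ_{1}); (b) the projection of σ onto the y-axis is ½(δ_{-1}+δ_{1}); and (c) the projection of σ onto the direction (1/√2, 1/√2) is ½(δ_{-1/√2} + δ_{1/√2}). Consequently no midpoint of a constant-speed SW₂-geodesic between μ₀ and μ₁ exists with these projections. -/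
open MeasureTheory Metric Filter Topology
open scoped ENNReal RealInnerProductSpace Pointwise

noncomputable section

/- Each of the three projections is supported on two points. On the support of σ both coordinates
are ±1, so their sum lies in {-2, 0, 2}, whereas the diagonal projection requires it to be ±1;
hence σ-almost every point satisfies a contradiction and σ = 0. -/

theorem MeasureTheory.ae_eq_or_eq_of_map_eq_smul_dirac_add {α β : Type*} [MeasurableSpace α]
    [MeasurableSpace β] [MeasurableSingletonClass β] {μ : Measure α} {f : α → β}
    (hf : AEMeasurable f μ) {a b : β} {c : ℝ≥0∞}
    (h : μ.map f = c • (Measure.dirac a + Measure.dirac b)) :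
    ∀ᵐ x ∂μ, f x = a ∨ f x = b := by
  refine ae_of_ae_map (p := fun y => y = a ∨ y = b) hf ?_
  rw [h]
  refine Measure.ae_smul_measure ?_ c
  rw [ae_add_measure_iff, ae_dirac_eq, ae_dirac_eq]
  exact ⟨Or.inl rfl, Or.inr rfl⟩

theorem EuclideanSpace.inner_smul_single_add_single {n : Type*} [Fintype n] [DecidableEq n]
    (x : EuclideanSpace ℝ n) (c : ℝ) (i j : n) :
    ⟪x, c • (EuclideanSpace.single i 1 + EuclideanSpace.single j 1)⟫ = c * (x i + x j) := by
  simp [inner_smul_right, inner_add_right, EuclideanSpace.inner_single_right, mul_add]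

theorem add_ne_neg_one_and_add_ne_one {s t : ℝ} (hs : s = -1 ∨ s = 1) (ht : t = -1 ∨ t = 1) :
    s + t ≠ -1 ∧ s + t ≠ 1 := by
  rcases hs with rfl | rfl <;> rcases ht with rfl | rfl <;> norm_num

/-- there is no probability measure on ℝ² whose projections onto the x-axis and
y-axis are ½(δ₋₁+δ₁) and whose projection onto the diagonal direction (1/√2,1/√2) is
½(δ_{-1/√2}+δ_{1/√2}); hence the midpoint of an SW₂-geodesic between
μ₀ = ½(δ_{(-1,-1)}+δ_{(1,1)}) and μ₁ = ½(δ_{(-1,1)}+δ_{(1,-1)}) cannot exist. -/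
theorem no_midpoint_measure :
    ¬ ∃ σ : Measure (Euc 2), IsProbabilityMeasure σ ∧
      σ.map (fun x => ⟪x, EuclideanSpace.single (0 : Fin 2) (1 : ℝ)⟫)
        = (1/2 : ℝ≥0∞) • (Measure.dirac (-1 : ℝ) + Measure.dirac (1 : ℝ)) ∧
      σ.map (fun x => ⟪x, EuclideanSpace.single (1 : Fin 2) (1 : ℝ)⟫)
        = (1/2 : ℝ≥0∞) • (Measure.dirac (-1 : ℝ) + Measure.dirac (1 : ℝ)) ∧
      σ.map (fun x => ⟪x, (Real.sqrt 2)⁻¹ •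
          (EuclideanSpace.single (0 : Fin 2) (1 : ℝ) + EuclideanSpace.single (1 : Fin 2) (1 : ℝ))⟫)
        = (1/2 : ℝ≥0∞) • (Measure.dirac (-(Real.sqrt 2)⁻¹) + Measure.dirac ((Real.sqrt 2)⁻¹)) := by
  rintro ⟨σ, hσ, h0, h1, hdiag⟩
  have hc : (Real.sqrt 2)⁻¹ ≠ 0 := by positivity
  have ae0 := ae_eq_or_eq_of_map_eq_smul_dirac_add (by fun_prop) h0
  have ae1 := ae_eq_or_eq_of_map_eq_smul_dirac_add (by fun_prop) h1
  have aediag := ae_eq_or_eq_of_map_eq_smul_dirac_add (by fun_prop) hdiag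
  have ae_false : ∀ᵐ _ ∂σ, False := by
    filter_upwards [ae0, ae1, aediag] with x hx0 hx1 hxdiag
    simp only [EuclideanSpace.inner_single_right, one_mul, conj_trivial] at hx0 hx1
    rw [EuclideanSpace.inner_smul_single_add_single] at hxdiag
    obtain ⟨hne_neg, hne_pos⟩ := add_ne_neg_one_and_add_ne_one hx0 hx1
    rcases hxdiag with h | h
    · exact hne_neg (mul_left_cancel₀ hc (by linarith))
    · exact hne_pos (mul_left_cancel₀ hc (by linarith))
  exact IsProbabilityMeasure.ne_zero σ
    (ae_eq_bot.mp (Filter.eventually_false_iff_eq_bot.mp ae_false))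
end
end

section
/- Let λ ∈ P₂(ℝ) be absolutely continuous with log-concave density, and let μ, ν ∈ P₂(ℝ) satisfy μ ≤ b·λ and ν ≤ b·λ for some b > 0. Then the displacement interpolation (μ_t)_{t∈[0,1]} between μ and ν (pushforward of μ under T_t = (1−t)id + tT, T the monotone optimal transport map) satisfies μ_t ≤ b·λ for all t ∈ [0,1]. -/
open MeasureTheory Metric Filter Topology
open scoped ENNReal RealInnerProductSpace Pointwise

noncomputable section

/-!
Fix `t` and an interval `[a, b]`. As `T_t = (1 - t) id + t T` is monotone, `T_t⁻¹ [a, b]` is an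
interval; for `p ≤ q` in it, `μ [p, q]` is bounded both by `b λ [p, q]` and, through `T`, by
`ν [T p, T q] ≤ b λ [T p, T q]`. By the one-dimensional Prékopa–Leindler inequality a log-concave
density gives `min (λ I) (λ J) ≤ λ ((1 - t) I + t J)` for intervals `I`, `J`, and here
`(1 - t) [p, q] + t [T p, T q] ⊆ [a, b]`. Inner regularity of `μ` yields
`μ_t [a, b] ≤ b λ [a, b]`, and measures on `ℝ` compared on all closed balls are compared everywhere
by the Besicovitch covering theorem.
-/

open Set

def IsLogConcave (f : ℝ → ℝ) : Prop :=
  ∀ x y : ℝ, ∀ t ∈ Icc (0 : ℝ) 1, f x ^ (1 - t) * f y ^ t ≤ f ((1 - t) * x + t * y)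

namespace Real

theorem min_le_rpow_one_sub_mul_rpow {a b t : ℝ} (ha : 0 ≤ a) (hb : 0 ≤ b)
    (ht : t ∈ Icc (0 : ℝ) 1) : min a b ≤ a ^ (1 - t) * b ^ t := by
  rcases (le_min ha hb).eq_or_lt with h | h
  · rw [← h]; positivity
  calc min a b = min a b ^ (1 - t) * min a b ^ t := by
        rw [← rpow_add h, sub_add_cancel, rpow_one]
    _ ≤ a ^ (1 - t) * b ^ t := by
        gcongr
        · linarith [ht.2]
        · exact min_le_left a b
        · exact ht.1
        · exact min_le_right a b

theorem inv_rpow_mul_rpow_le {a b t : ℝ} (ha : 0 < a) (hb : 0 < b) (ht : t ∈ Icc (0 : ℝ) 1) :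
    (a ^ (1 - t) * b ^ t)⁻¹ ≤ (1 - t) * a⁻¹ + t * b⁻¹ := by
  have h := geom_mean_le_arith_mean2_weighted (sub_nonneg.2 ht.2) ht.1
    (inv_nonneg.2 ha.le) (inv_nonneg.2 hb.le) (sub_add_cancel 1 t)
  rwa [inv_rpow ha.le, inv_rpow hb.le, ← mul_inv] at h

end Real

theorem ENNReal.min_mul_ofReal_inv_rpow_mul_rpow_le (A B : ℝ≥0∞) {a b t : ℝ} (ha : 0 < a)
    (hb : 0 < b) (ht : t ∈ Icc (0 : ℝ) 1) :
    min A B * ENNReal.ofReal (a ^ (1 - t) * b ^ t)⁻¹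
      ≤ ENNReal.ofReal (1 - t) * (A * ENNReal.ofReal a⁻¹)
        + ENNReal.ofReal t * (B * ENNReal.ofReal b⁻¹) := by
  have h1t : 0 ≤ 1 - t := sub_nonneg.2 ht.2
  calc min A B * ENNReal.ofReal (a ^ (1 - t) * b ^ t)⁻¹
      ≤ min A B * (ENNReal.ofReal (1 - t) * ENNReal.ofReal a⁻¹
        + ENNReal.ofReal t * ENNReal.ofReal b⁻¹) := by
        rw [← ENNReal.ofReal_mul h1t, ← ENNReal.ofReal_mul ht.1, ← ENNReal.ofReal_add
          (mul_nonneg h1t (inv_nonneg.2 ha.le)) (mul_nonneg ht.1 (inv_nonneg.2 hb.le))]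
        gcongr
        exact Real.inv_rpow_mul_rpow_le ha hb ht
    _ = ENNReal.ofReal (1 - t) * (min A B * ENNReal.ofReal a⁻¹)
        + ENNReal.ofReal t * (min A B * ENNReal.ofReal b⁻¹) := by ring
    _ ≤ _ := by
        gcongr
        exacts [min_le_left A B, min_le_right A B]

theorem isLUB_image_div_self {α : Type*} {g : α → ℝ} {S : Set α} {c : ℝ} (hc : 0 < c)
    (h : IsLUB (g '' S) c) : IsLUB ((fun x => g x / c) '' S) 1 := by
  rw [← image_image (· / c) g, show (· / c) = ⇑(OrderIso.divRight₀ c hc) from rfl,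
    OrderIso.isLUB_image]
  simpa [OrderIso.divRight₀, OrderIso.symm] using h

namespace MeasureTheory

variable {α : Type*} [MeasurableSpace α] (μ : Measure α)

theorem lintegral_ofReal_div_const (g : α → ℝ) {c : ℝ} (hc : 0 ≤ c) :
    ∫⁻ x, ENNReal.ofReal (g x / c) ∂μ = (∫⁻ x, ENNReal.ofReal (g x) ∂μ) * ENNReal.ofReal c⁻¹ := by
  simp_rw [div_eq_mul_inv, ENNReal.ofReal_mul' (inv_nonneg.2 hc)]
  exact lintegral_mul_const' _ _ ENNReal.ofReal_ne_top

theorem setLIntegral_ofReal_eq_lintegral_measure_setOf_lt {g : α → ℝ} (hg : Measurable g)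
    (hg0 : ∀ x, 0 ≤ g x) (S : Set α) :
    ∫⁻ x in S, ENNReal.ofReal (g x) ∂μ = ∫⁻ s in Ioi 0, μ ({x | s < g x} ∩ S) := by
  rw [lintegral_eq_lintegral_meas_lt _ (ae_of_all _ hg0) hg.aemeasurable]
  exact lintegral_congr fun s => Measure.restrict_apply (measurableSet_lt measurable_const hg)

theorem antitone_measure_setOf_lt_inter (g : α → ℝ) (S : Set α) :
    Antitone fun s => μ ({x | s < g x} ∩ S) := fun _ _ hss' =>
  measure_mono (inter_subset_inter_left _ fun _ hx => hss'.trans_lt hx)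

end MeasureTheory

theorem ofReal_mul_volume_add_le_volume {t : ℝ} (ht : t ∈ Icc (0 : ℝ) 1) {U V W : Set ℝ}
    (hU : U.Nonempty) (hUb : BddBelow U) (hUa : BddAbove U)
    (hV : V.Nonempty) (hVb : BddBelow V) (hVa : BddAbove V) (hW : W.OrdConnected)
    (hUVW : ∀ u ∈ U, ∀ v ∈ V, (1 - t) * u + t * v ∈ W) :
    ENNReal.ofReal (1 - t) * volume U + ENNReal.ofReal t * volume V ≤ volume W := by
  have h1t : 0 ≤ 1 - t := sub_nonneg.2 ht.2
  set S := (1 - t) • U + t • V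
  have hSW : S ⊆ W := by
    rintro _ ⟨_, ⟨u, hu, rfl⟩, _, ⟨v, hv, rfl⟩, rfl⟩
    exact hUVW u hu v hv
  have hS : S.Nonempty := hU.smul_set.add hV.smul_set
  have hSb : BddBelow S := (hUb.smul_of_nonneg h1t).add (hVb.smul_of_nonneg ht.1)
  have hSa : BddAbove S := (hUa.smul_of_nonneg h1t).add (hVa.smul_of_nonneg ht.1)
  have hSinf : sInf S = (1 - t) * sInf U + t * sInf V := by
    rw [csInf_add hU.smul_set (hUb.smul_of_nonneg h1t) hV.smul_set (hVb.smul_of_nonneg ht.1),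
      Real.sInf_smul_of_nonneg h1t, Real.sInf_smul_of_nonneg ht.1, smul_eq_mul, smul_eq_mul]
  have hSsup : sSup S = (1 - t) * sSup U + t * sSup V := by
    rw [csSup_add hU.smul_set (hUa.smul_of_nonneg h1t) hV.smul_set (hVa.smul_of_nonneg ht.1),
      Real.sSup_smul_of_nonneg h1t, Real.sSup_smul_of_nonneg ht.1, smul_eq_mul, smul_eq_mul]
  have hIoo : Ioo (sInf S) (sSup S) ⊆ W := fun z hz => by
    obtain ⟨x, hx, hxz⟩ := (csInf_lt_iff hSb hS).1 hz.1
    obtain ⟨y, hy, hzy⟩ := (lt_csSup_iff hSa hS).1 hz.2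
    exact hW.out (hSW hx) (hSW hy) ⟨hxz.le, hzy.le⟩
  have hUw := sub_nonneg.2 (csInf_le_csSup hU hUb hUa)
  have hVw := sub_nonneg.2 (csInf_le_csSup hV hVb hVa)
  calc ENNReal.ofReal (1 - t) * volume U + ENNReal.ofReal t * volume V
      ≤ ENNReal.ofReal (1 - t) * ENNReal.ofReal (sSup U - sInf U)
        + ENNReal.ofReal t * ENNReal.ofReal (sSup V - sInf V) := by
        gcongr
        · exact (measure_mono (subset_Icc_csInf_csSup hUb hUa)).trans_eq Real.volume_Icc
        · exact (measure_mono (subset_Icc_csInf_csSup hVb hVa)).trans_eq Real.volume_Icc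
    _ = volume (Ioo (sInf S) (sSup S)) := by
        rw [Real.volume_Ioo, hSinf, hSsup, ← ENNReal.ofReal_mul h1t, ← ENNReal.ofReal_mul ht.1,
          ← ENNReal.ofReal_add (mul_nonneg h1t hUw) (mul_nonneg ht.1 hVw)]
        ring_nf
    _ ≤ volume W := measure_mono hIoo

/-- The one-dimensional Prékopa–Leindler inequality, in the form of Henstock and Macbeath. -/
theorem setLIntegral_add_le_of_min_le {t : ℝ} (ht : t ∈ Icc (0 : ℝ) 1) {f₁ f₂ f : ℝ → ℝ}
    {I J K : Set ℝ} (hf₁ : Measurable f₁) (hf₂ : Measurable f₂) (hf : Measurable f)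
    (hf₁0 : ∀ x, 0 ≤ f₁ x) (hf₂0 : ∀ x, 0 ≤ f₂ x) (hf0 : ∀ x, 0 ≤ f x)
    (hI : Bornology.IsBounded I) (hJ : Bornology.IsBounded J)
    (hf₁I : IsLUB (f₁ '' I) 1) (hf₂J : IsLUB (f₂ '' J) 1)
    (hK : ∀ s, ({x | s < f x} ∩ K).OrdConnected)
    (hmin : ∀ u ∈ I, ∀ v ∈ J,
      (1 - t) * u + t * v ∈ K ∧ min (f₁ u) (f₂ v) ≤ f ((1 - t) * u + t * v)) :
    ENNReal.ofReal (1 - t) * (∫⁻ x in I, ENNReal.ofReal (f₁ x))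
      + ENNReal.ofReal t * ∫⁻ x in J, ENNReal.ofReal (f₂ x)
      ≤ ∫⁻ x in K, ENNReal.ofReal (f x) := by
  have hmeas₁ := (antitone_measure_setOf_lt_inter volume f₁ I).measurable
  have hmeas₂ := (antitone_measure_setOf_lt_inter volume f₂ J).measurable
  rw [setLIntegral_ofReal_eq_lintegral_measure_setOf_lt _ hf₁ hf₁0,
    setLIntegral_ofReal_eq_lintegral_measure_setOf_lt _ hf₂ hf₂0,
    setLIntegral_ofReal_eq_lintegral_measure_setOf_lt _ hf hf0, ← lintegral_const_mul _ hmeas₁,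
    ← lintegral_const_mul _ hmeas₂, ← lintegral_add_left (hmeas₁.const_mul _)]
  refine setLIntegral_mono' measurableSet_Ioi fun s _ => ?_
  rcases lt_or_ge s 1 with hs | hs
  · have hne : ∀ {g : ℝ → ℝ} {S : Set ℝ}, IsLUB (g '' S) 1 → ({x | s < g x} ∩ S).Nonempty := by
      intro g S h
      obtain ⟨_, ⟨x, hx, rfl⟩, hsx⟩ := (lt_isLUB_iff h).1 hs
      exact ⟨x, hsx, hx⟩
    refine ofReal_mul_volume_add_le_volume ht (hne hf₁I) (hI.bddBelow.mono inter_subset_right)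
      (hI.bddAbove.mono inter_subset_right) (hne hf₂J) (hJ.bddBelow.mono inter_subset_right)
      (hJ.bddAbove.mono inter_subset_right) (hK s) fun u hu v hv => ?_
    obtain ⟨hK, hle⟩ := hmin u hu.2 v hv.2
    exact ⟨(lt_min hu.1 hv.1).trans_le hle, hK⟩
  · have hempty : ∀ {g : ℝ → ℝ} {S : Set ℝ}, IsLUB (g '' S) 1 → {x | s < g x} ∩ S = ∅ :=
      fun h => eq_empty_of_forall_notMem fun x hx =>
        (hx.1.trans_le (h.1 ⟨x, hx.2, rfl⟩)).not_ge hs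
    simp only [hempty hf₁I, hempty hf₂J, measure_empty, mul_zero, add_zero, zero_le]

namespace IsLogConcave

variable {f : ℝ → ℝ}

theorem ordConnected_setOf_lt (hf0 : ∀ x, 0 ≤ f x) (hf : IsLogConcave f) (s : ℝ) :
    OrdConnected {x | s < f x} := by
  refine ⟨fun x hx y hy z hz => ?_⟩
  rcases hz.1.eq_or_lt with rfl | hxz
  · exact hx
  have hxy : 0 < y - x := by linarith [hz.2]
  obtain ⟨c, hc, rfl⟩ : ∃ c ∈ Icc (0 : ℝ) 1, (1 - c) * x + c * y = z :=
    ⟨(z - x) / (y - x), ⟨by bound, div_le_one_of_le₀ (by linarith [hz.2]) hxy.le⟩,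
      by field_simp; ring⟩
  exact (lt_min hx hy).trans_le
    ((Real.min_le_rpow_one_sub_mul_rpow (hf0 x) (hf0 y) hc).trans (hf x y c hc))

theorem measurable (hf0 : ∀ x, 0 ≤ f x) (hf : IsLogConcave f) : Measurable f :=
  measurable_of_Ioi fun s => (hf.ordConnected_setOf_lt hf0 s).measurableSet

theorem min_const (hf0 : ∀ x, 0 ≤ f x) (hf : IsLogConcave f) {M : ℝ} (hM : 0 < M) :
    IsLogConcave fun x => min (f x) M := by
  intro x y t ht
  have hx : 0 ≤ min (f x) M := le_min (hf0 x) hM.le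
  have hy : 0 ≤ min (f y) M := le_min (hf0 y) hM.le
  have h1t : 0 ≤ 1 - t := by linarith [ht.2]
  refine le_min ?_ ?_
  · calc min (f x) M ^ (1 - t) * min (f y) M ^ t ≤ f x ^ (1 - t) * f y ^ t := by
          gcongr
          exacts [Real.rpow_nonneg (hf0 x) _, min_le_left _ M, ht.1, min_le_left _ M]
      _ ≤ f ((1 - t) * x + t * y) := hf x y t ht
  · calc min (f x) M ^ (1 - t) * min (f y) M ^ t ≤ M ^ (1 - t) * M ^ t := by
          gcongr
          exacts [min_le_right (f x) _, ht.1, min_le_right (f y) _]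
      _ = M := by rw [← Real.rpow_add hM, sub_add_cancel, Real.rpow_one]

theorem min_div_le_div_rpow_mul_rpow (hf0 : ∀ x, 0 ≤ f x) (hf : IsLogConcave f) {M₁ M₂ t : ℝ}
    (hM₁ : 0 < M₁) (hM₂ : 0 < M₂) (ht : t ∈ Icc (0 : ℝ) 1) (u v : ℝ) :
    min (f u / M₁) (f v / M₂) ≤ f ((1 - t) * u + t * v) / (M₁ ^ (1 - t) * M₂ ^ t) :=
  calc min (f u / M₁) (f v / M₂) ≤ (f u / M₁) ^ (1 - t) * (f v / M₂) ^ t :=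
        Real.min_le_rpow_one_sub_mul_rpow (div_nonneg (hf0 u) hM₁.le)
          (div_nonneg (hf0 v) hM₂.le) ht
    _ = f u ^ (1 - t) * f v ^ t / (M₁ ^ (1 - t) * M₂ ^ t) := by
        rw [Real.div_rpow (hf0 u) hM₁.le, Real.div_rpow (hf0 v) hM₂.le, div_mul_div_comm]
    _ ≤ f ((1 - t) * u + t * v) / (M₁ ^ (1 - t) * M₂ ^ t) := by
        gcongr
        exact hf u v t ht

theorem min_setLIntegral_Icc_le_of_bddAbove (hf0 : ∀ x, 0 ≤ f x) (hf : IsLogConcave f)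
    (hbdd : BddAbove (range f)) {t : ℝ} (ht : t ∈ Icc (0 : ℝ) 1) {p q P Q : ℝ} (hpq : p ≤ q)
    (hPQ : P ≤ Q) :
    min (∫⁻ x in Icc p q, ENNReal.ofReal (f x)) (∫⁻ x in Icc P Q, ENNReal.ofReal (f x))
      ≤ ∫⁻ x in Icc ((1 - t) * p + t * P) ((1 - t) * q + t * Q), ENNReal.ofReal (f x) := by
  have h1t : 0 ≤ 1 - t := sub_nonneg.2 ht.2
  have ht0 : 0 ≤ t := ht.1
  have hsup : ∀ {a b : ℝ}, a ≤ b → IsLUB (f '' Icc a b) (sSup (f '' Icc a b)) := fun hab =>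
    isLUB_csSup ((nonempty_Icc.2 hab).image f) (hbdd.mono (image_subset_range _ _))
  have hsup_nonneg : ∀ {a b : ℝ}, a ≤ b → 0 ≤ sSup (f '' Icc a b) := fun hab =>
    (hf0 _).trans ((hsup hab).1 ⟨_, left_mem_Icc.2 hab, rfl⟩)
  have hzero : ∀ {a b : ℝ}, a ≤ b → 0 = sSup (f '' Icc a b) →
      ∫⁻ x in Icc a b, ENNReal.ofReal (f x) = 0 := fun hab h0 =>
    (setLIntegral_congr_fun measurableSet_Icc fun x hx =>
      ENNReal.ofReal_eq_zero.2 (h0 ▸ (hsup hab).1 ⟨x, hx, rfl⟩)).trans lintegral_zero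
  rcases (hsup_nonneg hpq).eq_or_lt with h₁ | hM₁
  · simp [hzero hpq h₁]
  rcases (hsup_nonneg hPQ).eq_or_lt with h₂ | hM₂
  · simp [hzero hPQ h₂]
  set M₁ := sSup (f '' Icc p q)
  set M₂ := sSup (f '' Icc P Q)
  set M := M₁ ^ (1 - t) * M₂ ^ t
  have hM : 0 < M := by positivity
  have hmeas := hf.measurable hf0
  have key := setLIntegral_add_le_of_min_le ht (f₁ := fun x => f x / M₁)
    (f₂ := fun x => f x / M₂) (f := fun x => f x / M)
    (K := Icc ((1 - t) * p + t * P) ((1 - t) * q + t * Q))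
    (hmeas.div_const _) (hmeas.div_const _) (hmeas.div_const _)
    (fun x => div_nonneg (hf0 x) hM₁.le) (fun x => div_nonneg (hf0 x) hM₂.le)
    (fun x => div_nonneg (hf0 x) hM.le) (isBounded_Icc p q) (isBounded_Icc P Q)
    (isLUB_image_div_self hM₁ (hsup hpq)) (isLUB_image_div_self hM₂ (hsup hPQ))
    (fun s => by
      simp_rw [lt_div_iff₀ hM]
      exact (hf.ordConnected_setOf_lt hf0 _).inter ordConnected_Icc)
    (fun u hu v hv => ⟨⟨by gcongr; exacts [hu.1, hv.1], by gcongr; exacts [hu.2, hv.2]⟩,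
      hf.min_div_le_div_rpow_mul_rpow hf0 hM₁ hM₂ ht u v⟩)
  rw [lintegral_ofReal_div_const _ _ hM₁.le, lintegral_ofReal_div_const _ _ hM₂.le,
    lintegral_ofReal_div_const _ _ hM.le] at key
  rw [← ENNReal.mul_le_mul_iff_left (ENNReal.ofReal_pos.2 (inv_pos.2 hM)).ne'
    ENNReal.ofReal_ne_top]
  exact (ENNReal.min_mul_ofReal_inv_rpow_mul_rpow_le _ _ hM₁ hM₂ ht).trans key

theorem min_setLIntegral_Icc_le (hf0 : ∀ x, 0 ≤ f x) (hf : IsLogConcave f) {t : ℝ}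
    (ht : t ∈ Icc (0 : ℝ) 1) {p q P Q : ℝ} (hpq : p ≤ q) (hPQ : P ≤ Q) :
    min (∫⁻ x in Icc p q, ENNReal.ofReal (f x)) (∫⁻ x in Icc P Q, ENNReal.ofReal (f x))
      ≤ ∫⁻ x in Icc ((1 - t) * p + t * P) ((1 - t) * q + t * Q), ENNReal.ofReal (f x) := by
  set g : ℕ → ℝ → ℝ := fun n x => min (f x) (n + 1)
  have hg_mono : ∀ x, Monotone fun n => ENNReal.ofReal (g n x) := fun x n m hnm =>
    ENNReal.ofReal_le_ofReal (min_le_min_left _ (by gcongr))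
  have hmono : ∀ S : Set ℝ, Monotone fun n => ∫⁻ x in S, ENNReal.ofReal (g n x) :=
    fun S n m hnm => lintegral_mono fun x => hg_mono x hnm
  have hlim : ∀ S : Set ℝ,
      ⨆ n, ∫⁻ x in S, ENNReal.ofReal (g n x) = ∫⁻ x in S, ENNReal.ofReal (f x) := by
    intro S
    rw [← lintegral_iSup (fun n => ((hf.measurable hf0).min measurable_const).ennreal_ofReal)
      fun n m hnm x => hg_mono x hnm]
    refine lintegral_congr fun x => le_antisymm
      (iSup_le fun n => ENNReal.ofReal_le_ofReal (min_le_left _ _)) ?_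
    obtain ⟨n, hn⟩ := exists_nat_ge (f x)
    exact le_iSup_of_le n (le_of_eq (by rw [min_eq_left (by linarith)]))
  rw [← hlim (Icc p q), ← hlim (Icc P Q)]
  refine (iSup_inf_of_monotone (hmono _) (hmono _)).symm.trans_le (iSup_le fun n => ?_)
  have hgn : IsLogConcave (g n) := hf.min_const hf0 n.cast_add_one_pos
  exact (hgn.min_setLIntegral_Icc_le_of_bddAbove (fun x => le_min (hf0 x) n.cast_add_one_pos.le)
    ⟨n + 1, by rintro _ ⟨x, rfl⟩; exact min_le_right _ _⟩ ht hpq hPQ).trans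
    (lintegral_mono fun x => ENNReal.ofReal_le_ofReal (min_le_left _ _))

end IsLogConcave

theorem measure_preimage_Icc_le_of_min_le {μ ν lam : Measure ℝ} [IsFiniteMeasure μ] {c : ℝ≥0∞}
    {T : ℝ → ℝ} (hT : Monotone T) (hTν : μ.map T = ν) (hμ : μ ≤ c • lam) (hν : ν ≤ c • lam)
    {t : ℝ} (ht : t ∈ Icc (0 : ℝ) 1)
    (hlam : ∀ ⦃p q P Q : ℝ⦄, p ≤ q → P ≤ Q → min (lam (Icc p q)) (lam (Icc P Q))
      ≤ lam (Icc ((1 - t) * p + t * P) ((1 - t) * q + t * Q))) (a b : ℝ) :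
    μ ((fun r => (1 - t) * r + t * T r) ⁻¹' Icc a b) ≤ c * lam (Icc a b) := by
  set Tt := fun r => (1 - t) * r + t * T r
  have h1t : 0 ≤ 1 - t := sub_nonneg.2 ht.2
  have ht0 : 0 ≤ t := ht.1
  have hTt : Monotone Tt := fun r r' h => by
    have := hT h
    dsimp only [Tt]
    gcongr
  have hIcc : ∀ ⦃p q : ℝ⦄, Tt p ∈ Icc a b → Tt q ∈ Icc a b → p ≤ q →
      μ (Icc p q) ≤ c * lam (Icc a b) := by
    intro p q hp hq hpq
    have hsource : μ (Icc p q) ≤ c * lam (Icc p q) := Measure.le_iff'.1 hμ _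
    have htarget : μ (Icc p q) ≤ c * lam (Icc (T p) (T q)) :=
      calc μ (Icc p q) ≤ μ (T ⁻¹' Icc (T p) (T q)) :=
            measure_mono fun x hx => ⟨hT hx.1, hT hx.2⟩
        _ = ν (Icc (T p) (T q)) := by
            rw [← hTν, Measure.map_apply hT.measurable measurableSet_Icc]
        _ ≤ c * lam (Icc (T p) (T q)) := Measure.le_iff'.1 hν _
    calc μ (Icc p q) ≤ min (c * lam (Icc p q)) (c * lam (Icc (T p) (T q))) :=
          le_min hsource htarget
      _ = c * min (lam (Icc p q)) (lam (Icc (T p) (T q))) :=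
          (Monotone.map_min fun _ _ h => mul_le_mul_right h c).symm
      _ ≤ c * lam (Icc (Tt p) (Tt q)) := by gcongr; exact hlam hpq (hT hpq)
      _ ≤ c * lam (Icc a b) := mul_le_mul_right (measure_mono (Icc_subset_Icc hp.1 hq.2)) c
  rw [(hTt.measurable measurableSet_Icc).measure_eq_iSup_isCompact]
  refine iSup₂_le fun K hKJ => iSup_le fun hK => ?_
  rcases K.eq_empty_or_nonempty with rfl | hKne
  · simp
  exact (measure_mono (subset_Icc_csInf_csSup hK.bddBelow hK.bddAbove)).trans
    (hIcc (hKJ (hK.sInf_mem hKne)) (hKJ (hK.sSup_mem hKne))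
      (csInf_le_csSup hKne hK.bddBelow hK.bddAbove))

theorem MeasureTheory.Measure.le_of_forall_closedBall_le {α : Type*} [MetricSpace α]
    [MeasurableSpace α] [BorelSpace α] [SecondCountableTopology α] [HasBesicovitchCovering α]
    {ρ ν : Measure α} [SFinite ρ] [IsLocallyFiniteMeasure ν]
    (h : ∀ x, ∀ r > 0, ρ (closedBall x r) ≤ ν (closedBall x r)) : ρ ≤ ν := by
  refine Measure.le_iff'.2 fun s => (Besicovitch.vitaliFamily ρ).measure_le_of_frequently_le ν
    Measure.AbsolutelyContinuous.rfl s fun x _ => ?_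
  refine Filter.Eventually.frequently ?_
  filter_upwards [(Besicovitch.vitaliFamily ρ).eventually_filterAt_mem_setsAt x]
  rintro _ ⟨r, hr, rfl⟩
  exact h x r hr

theorem displacement_interpolation_bounded_general (lam μ ν : Measure ℝ)
    [IsProbabilityMeasure lam] [IsProbabilityMeasure μ]
    (f : ℝ → ℝ) (hf0 : ∀ r, 0 ≤ f r)
    (hlam : lam = volume.withDensity (fun r => ENNReal.ofReal (f r)))
    (hlogconc : ∀ x y : ℝ, ∀ t ∈ Set.Icc (0 : ℝ) 1,
      f x ^ (1 - t) * f y ^ t ≤ f ((1 - t) * x + t * y))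
    (b : ℝ)
    (hμb : μ ≤ ENNReal.ofReal b • lam) (hνb : ν ≤ ENNReal.ofReal b • lam)
    (T : ℝ → ℝ) (hT : Monotone T) (hTpush : μ.map T = ν) :
    ∀ t ∈ Set.Icc (0 : ℝ) 1,
      μ.map (fun r => (1 - t) * r + t * T r) ≤ ENNReal.ofReal b • lam := by
  intro t ht
  have hlam_Icc : ∀ ⦃p q P Q : ℝ⦄, p ≤ q → P ≤ Q → min (lam (Icc p q)) (lam (Icc P Q))
      ≤ lam (Icc ((1 - t) * p + t * P) ((1 - t) * q + t * Q)) := fun p q P Q hpq hPQ => by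
    simpa only [hlam, withDensity_apply _ measurableSet_Icc] using
      IsLogConcave.min_setLIntegral_Icc_le hf0 hlogconc ht hpq hPQ
  have hTt : Measurable fun r => (1 - t) * r + t * T r := by
    have := hT.measurable
    fun_prop
  have : IsFiniteMeasure (ENNReal.ofReal b • lam) := lam.smul_finite ENNReal.ofReal_ne_top
  refine Measure.le_of_forall_closedBall_le fun x r _ => ?_
  rw [Real.closedBall_eq_Icc, Measure.map_apply hTt measurableSet_Icc, Measure.smul_apply,
    smul_eq_mul]
  exact measure_preimage_Icc_le_of_min_le hT hTpush hμb hνb ht hlam_Icc _ _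

/-- if λ has a log-concave density and μ, ν ≤ b·λ on ℝ, then the displacement
interpolation along a monotone transport map T from μ to ν stays ≤ b·λ. -/
theorem displacement_interpolation_bounded (lam μ ν : Measure ℝ)
    [IsProbabilityMeasure lam] [IsProbabilityMeasure μ] [IsProbabilityMeasure ν]
    (hlam2 : FiniteSecondMoment lam) (hμ2 : FiniteSecondMoment μ) (hν2 : FiniteSecondMoment ν)
    (f : ℝ → ℝ) (hf0 : ∀ r, 0 ≤ f r)
    (hlam : lam = volume.withDensity (fun r => ENNReal.ofReal (f r)))
    (hlogconc : ∀ x y : ℝ, ∀ t ∈ Set.Icc (0 : ℝ) 1,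
      f x ^ (1 - t) * f y ^ t ≤ f ((1 - t) * x + t * y))
    (b : ℝ) (hb : 0 < b)
    (hμb : μ ≤ ENNReal.ofReal b • lam) (hνb : ν ≤ ENNReal.ofReal b • lam)
    (T : ℝ → ℝ) (hT : Monotone T) (hTpush : μ.map T = ν) :
    ∀ t ∈ Set.Icc (0 : ℝ) 1,
      μ.map (fun r => (1 - t) * r + t * T r) ≤ ENNReal.ofReal b • lam :=
  displacement_interpolation_bounded_general lam μ ν f hf0 hlam hlogconc b hμb hνb T hT hTpush
end
end

section
/- Let μ ∈ P₂(ℝ^d) be supported in the ball B(0,M), with h(μ) > 0 and such that each projection μ̂^θ is absolutely continuous with respect to Lebesgue measure on ℝ. Then SJ₂(μ) := ⨍_{S^{d-1}} ∫_ℝ F^θ(r)(1−F^θ(r))/f^θ(r) dr dθ ≤ 2M / h(μ), where f^θ and F^θ are the density and CDF of μ̂^θ and 0/0 := 0. -/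
open MeasureTheory Metric Filter Topology
open scoped ENNReal RealInnerProductSpace Pointwise

noncomputable section

/-- Boundary (Minkowski content type) measure ν⁺(A) = liminf_{r→0⁺} (ν(Aʳ) − ν(A))/r. -/
def boundaryMeasure {X : Type*} [MeasurableSpace X] [PseudoMetricSpace X]
    (ν : Measure X) (A : Set X) : ℝ≥0∞ :=
  Filter.liminf (fun r : ℝ => (ν (Metric.thickening r A) - ν A) / ENNReal.ofReal r)
    (𝓝[>] (0 : ℝ))

/-- Cheeger-type isoperimetric constant h(ν) = inf_A ν⁺(A)/min{ν(A), 1−ν(A)}, the infimum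
being over Borel sets A with 0 < ν(A) < 1. -/
def cheeger {X : Type*} [MeasurableSpace X] [PseudoMetricSpace X] (ν : Measure X) : ℝ≥0∞ :=
  ⨅ (A : Set X) (_ : MeasurableSet A) (_ : 0 < ν A) (_ : ν A < 1),
    boundaryMeasure ν A / min (ν A) (1 - ν A)

/-- The sliced functional SJ₂(μ) = ⨍ ∫ F^θ(1−F^θ)/f^θ, where f^θ, F^θ are the density and CDF
of the projection μ̂^θ (with the convention 0/0 = 0). -/
def SJ2 (d : ℕ) (μ : Measure (Euc d)) : ℝ≥0∞ :=
  ∫⁻ θ, (∫⁻ r,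
      ((projMeas d μ θ) (Set.Iic r) * (1 - (projMeas d μ θ) (Set.Iic r))) /
        (projMeas d μ θ).rnDeriv volume r ∂(volume : Measure ℝ))
    ∂(uniformSphere d)



lemma thickening_halfspace {d : ℕ} (θ : Euc d) (hθ : ‖θ‖ = 1) (r s : ℝ) (hs : 0 < s) :
    Metric.thickening s {x : Euc d | ⟪x, θ⟫ ≤ r} = {x : Euc d | ⟪x, θ⟫ < r + s} := by
  ext x
  rw [Metric.mem_thickening_iff]
  constructor
  · rintro ⟨y, hy, hxy⟩
    have h1 : ⟪x - y, θ⟫ ≤ ‖x - y‖ := by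
      calc ⟪x - y, θ⟫ ≤ ‖x - y‖ * ‖θ‖ := real_inner_le_norm _ _
        _ = ‖x - y‖ := by rw [hθ, mul_one]
    have h2 : ⟪x, θ⟫ = ⟪x - y, θ⟫ + ⟪y, θ⟫ := by rw [inner_sub_left]; ring
    have h3 : ‖x - y‖ < s := by rw [← dist_eq_norm]; exact hxy
    have hy' : ⟪y, θ⟫ ≤ r := hy
    simp only [Set.mem_setOf_eq]
    linarith
  · intro hx
    simp only [Set.mem_setOf_eq] at hx
    by_cases h : ⟪x, θ⟫ ≤ r
    · exact ⟨x, h, by simpa [dist_self] using hs⟩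
    · push_neg at h
      refine ⟨x - (⟪x, θ⟫ - r) • θ, ?_, ?_⟩
      · have : ⟪x - (⟪x, θ⟫ - r) • θ, θ⟫ = ⟪x, θ⟫ - (⟪x, θ⟫ - r) * ⟪θ, θ⟫ := by
          rw [inner_sub_left, real_inner_smul_left]
        have hθθ : ⟪θ, θ⟫ = 1 := by
          rw [real_inner_self_eq_norm_mul_norm, hθ]; norm_num
        simp only [Set.mem_setOf_eq, this, hθθ]
        linarith
      · rw [dist_eq_norm]
        have : x - (x - (⟪x, θ⟫ - r) • θ) = (⟪x, θ⟫ - r) • θ := by abel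
        rw [this, norm_smul, hθ, mul_one, Real.norm_eq_abs, abs_of_pos (by linarith)]
        linarith

lemma liminf_Ioc_le_rnDeriv (ν : Measure ℝ) [IsProbabilityMeasure ν] :
    ∀ᵐ r ∂(volume : Measure ℝ),
      Filter.liminf (fun s : ℝ => ν (Set.Ioc r (r + s)) / ENNReal.ofReal s) (𝓝[>] 0)
        ≤ ν.rnDeriv volume r := by
  filter_upwards [(IsUnifLocDoublingMeasure.vitaliFamily (volume : Measure ℝ) 1).ae_tendsto_rnDeriv
    ν] with r hr
  have h1 : Tendsto (fun s : ℝ => r + s) (𝓝[>] 0) (𝓝[>] r) := by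
    refine tendsto_nhdsWithin_of_tendsto_nhds_of_eventually_within _ ?_ ?_
    · have := ((continuous_add_left r).tendsto 0).mono_left (nhdsWithin_le_nhds (s := Set.Ioi 0))
      simpa using this
    · filter_upwards [self_mem_nhdsWithin] with s hs
      simp only [Set.mem_Ioi] at hs ⊢
      linarith
  have h2 : Tendsto (fun s : ℝ => ν (Set.Icc r (r + s)) / volume (Set.Icc r (r + s))) (𝓝[>] 0)
      (𝓝 (ν.rnDeriv volume r)) :=
    (hr.comp (Real.tendsto_Icc_vitaliFamily_right r)).comp h1
  have h3 : ∀ᶠ s in 𝓝[>] (0 : ℝ), ν (Set.Ioc r (r + s)) / ENNReal.ofReal s ≤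
      ν (Set.Icc r (r + s)) / volume (Set.Icc r (r + s)) := by
    filter_upwards [self_mem_nhdsWithin] with s _
    rw [Real.volume_Icc, show r + s - r = s by ring]
    exact ENNReal.div_le_div_right (measure_mono Set.Ioc_subset_Icc_self) _
  calc Filter.liminf (fun s : ℝ => ν (Set.Ioc r (r + s)) / ENNReal.ofReal s) (𝓝[>] 0)
      ≤ Filter.liminf (fun s : ℝ => ν (Set.Icc r (r + s)) / volume (Set.Icc r (r + s))) (𝓝[>] 0) :=
        liminf_le_liminf h3
    _ = ν.rnDeriv volume r := h2.liminf_eq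


/-- if μ is supported in B(0,M), has positive Cheeger constant, and all its
projections are absolutely continuous, then SJ₂(μ) ≤ 2M/h(μ). -/
theorem SJ2_le_of_cheeger (d : ℕ) (hd : 0 < d) (μ : Measure (Euc d))
    [IsProbabilityMeasure μ] (h2 : FiniteSecondMoment μ)
    (M : ℝ) (hM : 0 < M) (hsupp : μ (Metric.closedBall (0 : Euc d) M)ᶜ = 0)
    (hcheeger : 0 < cheeger μ)
    (hac : ∀ θ : sphere (0 : Euc d) 1, projMeas d μ θ ≪ (volume : Measure ℝ)) :
    SJ2 d μ ≤ ENNReal.ofReal (2 * M) / cheeger μ := by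
  have hball : μ (Metric.closedBall (0 : Euc d) M) = 1 := by
    have h := measure_add_measure_compl (μ := μ) (measurableSet_closedBall (x := (0 : Euc d)) (ε := M))
    rw [hsupp, add_zero, measure_univ] at h
    exact h
  have key : ∀ θ : sphere (0 : Euc d) 1,
      (∫⁻ r, ((projMeas d μ θ) (Set.Iic r) * (1 - (projMeas d μ θ) (Set.Iic r))) /
          (projMeas d μ θ).rnDeriv volume r ∂(volume : Measure ℝ))
        ≤ ENNReal.ofReal (2 * M) / cheeger μ := by
    intro θ
    have hθ : ‖(θ : Euc d)‖ = 1 := mem_sphere_zero_iff_norm.mp θ.2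
    have hmeas : Measurable fun x : Euc d => ⟪x, (θ : Euc d)⟫ :=
      (continuous_id.inner continuous_const).measurable
    have hprob : IsProbabilityMeasure (projMeas d μ θ) := by
      rw [projMeas]; exact Measure.isProbabilityMeasure_map hmeas.aemeasurable
    set ν := projMeas d μ θ with hνdef
    have hmap : ∀ s : Set ℝ, MeasurableSet s → ν s = μ ((fun x => ⟪x, (θ : Euc d)⟫) ⁻¹' s) :=
      fun s hs => Measure.map_apply hmeas hs
    have hpt : ∀ᵐ r ∂(volume : Measure ℝ),
        (ν (Set.Iic r) * (1 - ν (Set.Iic r))) / ν.rnDeriv volume r ≤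
          (Set.Icc (-M) M).indicator (fun _ => (cheeger μ)⁻¹) r := by
      filter_upwards [liminf_Ioc_le_rnDeriv ν] with r hlim
      set F := ν (Set.Iic r) with hF
      by_cases hF0 : F = 0
      · simp [hF0]
      by_cases hF1 : 1 - F = 0
      · simp [hF1]
      have hFle : F ≤ 1 := prob_le_one
      have hFlt : F < 1 := lt_of_le_of_ne hFle (fun h => hF1 (by rw [h, tsub_self]))
      set A := {x : Euc d | ⟪x, (θ : Euc d)⟫ ≤ r} with hAdef
      have hA : MeasurableSet A := hmeas measurableSet_Iic
      have hμA : μ A = F := by rw [hF, hmap _ measurableSet_Iic]; rfl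
      have hinner : ∀ x : Euc d, |⟪x, (θ : Euc d)⟫| ≤ ‖x‖ := fun x => by
        calc |⟪x, (θ : Euc d)⟫| ≤ ‖x‖ * ‖(θ : Euc d)‖ := abs_real_inner_le_norm _ _
          _ = ‖x‖ := by rw [hθ, mul_one]
      have hrM : r ∈ Set.Icc (-M) M := by
        constructor
        · by_contra hc
          push_neg at hc
          apply hF0
          rw [hF, hmap _ measurableSet_Iic]
          refine measure_mono_null ?_ hsupp
          intro x hx
          simp only [Set.mem_preimage, Set.mem_Iic] at hx
          simp only [Set.mem_compl_iff, Metric.mem_closedBall, dist_zero_right, not_le]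
          by_contra hxM
          push_neg at hxM
          have h1 := hinner x
          have h2 := neg_abs_le ⟪x, (θ : Euc d)⟫
          linarith
        · by_contra hc
          push_neg at hc
          have : (1 : ℝ≥0∞) ≤ F := by
            rw [hF, hmap _ measurableSet_Iic, ← hball]
            apply measure_mono
            intro x hx
            simp only [Metric.mem_closedBall, dist_zero_right] at hx
            simp only [Set.mem_preimage, Set.mem_Iic]
            have h1 := hinner x
            have h2 := le_abs_self ⟪x, (θ : Euc d)⟫
            linarith
          exact absurd hFlt (not_lt.mpr this)
      have hbd : boundaryMeasure μ A ≤ ν.rnDeriv volume r := by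
        refine le_trans (liminf_le_liminf ?_) hlim
        filter_upwards [self_mem_nhdsWithin] with s hs
        have hs' : (0 : ℝ) < s := hs
        rw [hAdef, thickening_halfspace _ hθ r s hs']
        have e1 : μ {x : Euc d | ⟪x, (θ : Euc d)⟫ < r + s} = ν (Set.Iio (r + s)) := by
          rw [hmap _ measurableSet_Iio]; rfl
        rw [e1, ← hAdef, hμA]
        refine ENNReal.div_le_div_right ?_ _
        rw [tsub_le_iff_right]
        calc ν (Set.Iio (r + s)) ≤ ν (Set.Ioc r (r + s) ∪ Set.Iic r) := by
              apply measure_mono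
              intro y hy
              simp only [Set.mem_Iio] at hy
              by_cases h : y ≤ r
              · exact Or.inr h
              · exact Or.inl ⟨lt_of_not_ge h, le_of_lt hy⟩
          _ ≤ ν (Set.Ioc r (r + s)) + ν (Set.Iic r) := measure_union_le _ _
      have h0A : (0 : ℝ≥0∞) < μ A := by rw [hμA]; exact pos_iff_ne_zero.mpr hF0
      have h1A : μ A < 1 := by rw [hμA]; exact hFlt
      have hcheeg : cheeger μ ≤ ν.rnDeriv volume r / min F (1 - F) := by
        calc cheeger μ ≤ boundaryMeasure μ A / min (μ A) (1 - μ A) :=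
              iInf_le_of_le A <| iInf_le_of_le hA <| iInf_le_of_le h0A <| iInf_le _ h1A
          _ = boundaryMeasure μ A / min F (1 - F) := by rw [hμA]
          _ ≤ ν.rnDeriv volume r / min F (1 - F) := ENNReal.div_le_div_right hbd _
      have hmin0 : min F (1 - F) ≠ 0 :=
        ne_of_gt (lt_min (pos_iff_ne_zero.mpr hF0) (pos_iff_ne_zero.mpr hF1))
      have hmintop : min F (1 - F) ≠ ∞ :=
        (((min_le_left _ _).trans hFle).trans_lt ENNReal.one_lt_top).ne
      have hmul : cheeger μ * min F (1 - F) ≤ ν.rnDeriv volume r :=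
        (ENNReal.le_div_iff_mul_le (Or.inl hmin0) (Or.inl hmintop)).mp hcheeg
      have hnum : F * (1 - F) ≤ min F (1 - F) := by
        refine le_min ?_ ?_
        · calc F * (1 - F) ≤ F * 1 := mul_le_mul_right tsub_le_self _
            _ = F := mul_one F
        · calc F * (1 - F) ≤ 1 * (1 - F) := mul_le_mul_left hFle _
            _ = 1 - F := one_mul _
      have hfin : F * (1 - F) / ν.rnDeriv volume r ≤ (cheeger μ)⁻¹ := by
        calc F * (1 - F) / ν.rnDeriv volume r
            ≤ min F (1 - F) / ν.rnDeriv volume r := ENNReal.div_le_div_right hnum _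
          _ ≤ min F (1 - F) / (cheeger μ * min F (1 - F)) := ENNReal.div_le_div_left hmul _
          _ = (cheeger μ)⁻¹ := by
              rw [div_eq_mul_inv, ENNReal.mul_inv (Or.inr hmintop) (Or.inr hmin0),
                mul_comm (cheeger μ)⁻¹, ← mul_assoc,
                ENNReal.mul_inv_cancel hmin0 hmintop, one_mul]
      rw [Set.indicator_of_mem hrM]
      exact hfin
    calc (∫⁻ r, (ν (Set.Iic r) * (1 - ν (Set.Iic r))) / ν.rnDeriv volume r ∂(volume : Measure ℝ))
        ≤ ∫⁻ r, (Set.Icc (-M) M).indicator (fun _ => (cheeger μ)⁻¹) r ∂(volume : Measure ℝ) :=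
          lintegral_mono_ae hpt
      _ = (cheeger μ)⁻¹ * volume (Set.Icc (-M) M) := lintegral_indicator_const measurableSet_Icc _
      _ = ENNReal.ofReal (2 * M) / cheeger μ := by
          rw [Real.volume_Icc, show M - -M = 2 * M by ring, div_eq_mul_inv, mul_comm]
  have huniv : uniformSphere d Set.univ ≤ 1 := by
    rw [uniformSphere, Measure.smul_apply, smul_eq_mul]
    rcases eq_or_ne ((volume : Measure (Euc d)).toSphere Set.univ) 0 with h | h
    · simp [h]
    rcases eq_or_ne ((volume : Measure (Euc d)).toSphere Set.univ) ∞ with h' | h'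
    · simp [h']
    · rw [ENNReal.inv_mul_cancel h h']
  calc SJ2 d μ ≤ ∫⁻ _θ, ENNReal.ofReal (2 * M) / cheeger μ ∂(uniformSphere d) :=
        lintegral_mono key
    _ = (ENNReal.ofReal (2 * M) / cheeger μ) * uniformSphere d Set.univ := lintegral_const _
    _ ≤ (ENNReal.ofReal (2 * M) / cheeger μ) * 1 := mul_le_mul_right huniv _
    _ = ENNReal.ofReal (2 * M) / cheeger μ := mul_one _
end
end
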